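/- With the substitution s_0 = t_0 + √(-3)t_1, s_1 = t_0 - √(-3)t_1, s_2 = t_2 + √(-3)t_3, s_3 = t_2 - √(-3)t_3, s_4 = t_4, s_5 = t_5, the quartic polynomial σ_4(s_0,...,s_5), restricted to the real line (t_0,...,t_5) = (7/15 + (4/3)t, -1, 4/5 - t, t, -2, -8/15-(2/3)t), is a degree 4 polynomial in t with four distinct real roots. -/
import Mathlib


/-- Elementary symmetric polynomial `σ₄` of an explicit 6-element multiset. -/
lemma esymm6 (a b c d e g : ℂ) :
    (Multiset.esymm (a ::ₘ b ::ₘ c ::ₘ d ::ₘ e ::ₘ g ::ₘ 0) 4) =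
      a*b*c*d + a*b*c*e + a*b*c*g + a*b*d*e + a*b*d*g + a*b*e*g
      + a*c*d*e + a*c*d*g + a*c*e*g + a*d*e*g
      + b*c*d*e + b*c*d*g + b*c*e*g + b*d*e*g + c*d*e*g := by
  simp [Multiset.esymm, Multiset.powersetCard_cons, Multiset.powersetCard_zero_left,
    Multiset.powersetCard_one]
  ring

/-- The cubic `25t³ - 150t² + 135t + 179` has roots in `[-1,0]`, `[2,3]`, `[4,5]`. -/
lemma cubic_roots : ∃ r1 r2 r3 : ℝ, r1 ∈ Set.Icc (-1:ℝ) 0 ∧ r2 ∈ Set.Icc (2:ℝ) 3 ∧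
    r3 ∈ Set.Icc (4:ℝ) 5 ∧
    (25*r1^3 - 150*r1^2 + 135*r1 + 179 = 0) ∧
    (25*r2^3 - 150*r2^2 + 135*r2 + 179 = 0) ∧
    (25*r3^3 - 150*r3^2 + 135*r3 + 179 = 0) := by
  set f : ℝ → ℝ := fun t => 25*t^3 - 150*t^2 + 135*t + 179 with hf
  have hc : Continuous f := by continuity
  have h1 : (0:ℝ) ∈ Set.Icc (f (-1)) (f 0) := by norm_num [hf]
  have h2 : (0:ℝ) ∈ Set.Icc (f 3) (f 2) := by norm_num [hf]
  have h3 : (0:ℝ) ∈ Set.Icc (f 4) (f 5) := by norm_num [hf]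
  obtain ⟨r1, hr1, he1⟩ := intermediate_value_Icc (by norm_num) hc.continuousOn h1
  obtain ⟨r2, hr2, he2⟩ := intermediate_value_Icc' (by norm_num) hc.continuousOn h2
  obtain ⟨r3, hr3, he3⟩ := intermediate_value_Icc (by norm_num) hc.continuousOn h3
  exact ⟨r1, r2, r3, hr1, hr2, hr3, he1, he2, he3⟩

/-- A monic-type cubic with three distinct roots factors completely. -/
lemma vieta (r1 r2 r3 : ℝ) (h12 : r1 ≠ r2) (h13 : r1 ≠ r3) (h23 : r2 ≠ r3)
    (e1 : 25*r1^3 - 150*r1^2 + 135*r1 + 179 = 0)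
    (e2 : 25*r2^3 - 150*r2^2 + 135*r2 + 179 = 0)
    (e3 : 25*r3^3 - 150*r3^2 + 135*r3 + 179 = 0) :
    ∀ t : ℝ, 25*t^3 - 150*t^2 + 135*t + 179 = 25*(t-r1)*(t-r2)*(t-r3) := by
  set A : ℝ := 25*(r1+r2+r3) - 150 with hA
  set B : ℝ := 135 - 25*(r1*r2+r1*r3+r2*r3) with hB
  set C : ℝ := 179 + 25*(r1*r2*r3) with hC
  have E1 : A*r1^2 + B*r1 + C = 0 := by rw [hA, hB, hC]; linear_combination e1
  have E2 : A*r2^2 + B*r2 + C = 0 := by rw [hA, hB, hC]; linear_combination e2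
  have E3 : A*r3^2 + B*r3 + C = 0 := by rw [hA, hB, hC]; linear_combination e3
  have g12 : A*(r1+r2) + B = 0 := by
    have h : (r1 - r2) * (A*(r1+r2) + B) = 0 := by linear_combination E1 - E2
    rcases mul_eq_zero.mp h with h | h
    · exact absurd (by linarith) h12
    · exact h
  have g13 : A*(r1+r3) + B = 0 := by
    have h : (r1 - r3) * (A*(r1+r3) + B) = 0 := by linear_combination E1 - E3
    rcases mul_eq_zero.mp h with h | h
    · exact absurd (by linarith) h13
    · exact h
  have hA0 : A = 0 := by
    have h : (r2 - r3) * A = 0 := by linear_combination g12 - g13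
    rcases mul_eq_zero.mp h with h | h
    · exact absurd (by linarith) h23
    · exact h
  have hB0 : B = 0 := by rw [hA0] at g12; linarith
  have hC0 : C = 0 := by rw [hA0, hB0] at E1; linarith
  intro t
  have hA' : 25*(r1+r2+r3) - 150 = 0 := hA ▸ hA0
  have hB' : 135 - 25*(r1*r2+r1*r3+r2*r3) = 0 := hB ▸ hB0
  have hC' : 179 + 25*(r1*r2*r3) = 0 := hC ▸ hC0
  linear_combination t^2*hA' + t*hB' + hC'

/-- The substitution `(s₀,…,s₅) = (t₀+√-3·t₁, t₀-√-3·t₁, t₂+√-3·t₃, t₂-√-3·t₃, t₄, t₅)`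
composed with the real line `(t₀,…,t₅) = (7/15 + (4/3)t, -1, 4/5 - t, t, -2, -8/15-(2/3)t)`. -/
noncomputable def sLine (t : ℝ) : Fin 6 → ℂ :=
  (fun v : Fin 6 → ℝ =>
    ![ (v 0 : ℂ) + Complex.I * Real.sqrt 3 * v 1,
       (v 0 : ℂ) - Complex.I * Real.sqrt 3 * v 1,
       (v 2 : ℂ) + Complex.I * Real.sqrt 3 * v 3,
       (v 2 : ℂ) - Complex.I * Real.sqrt 3 * v 3,
       (v 4 : ℂ), (v 5 : ℂ)])
  ![7/15 + (4/3)*t, -1, 4/5 - t, t, -2, -8/15 - (2/3)*t]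

/-- `σ₄` along the line is the explicit real quartic. -/
lemma key_quartic (t : ℝ) :
    (Finset.univ.val.map (sLine t)).esymm 4 =
      (((64/27)*t^4 - (2048/135)*t^3 + (832/45)*t^2 + (320/27)*t - 22912/3375 : ℝ) : ℂ) := by
  have hmap : (Finset.univ.val.map (sLine t)) =
      sLine t 0 ::ₘ sLine t 1 ::ₘ sLine t 2 ::ₘ sLine t 3 ::ₘ sLine t 4 ::ₘ sLine t 5 ::ₘ 0 := rfl
  rw [hmap, esymm6]
  have hw : (Complex.I * (Real.sqrt 3 : ℂ))^2 = -3 := by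
    rw [mul_pow, Complex.I_sq]
    have : ((Real.sqrt 3 : ℝ) : ℂ)^2 = ((3:ℝ) : ℂ) := by
      norm_cast
      exact Real.sq_sqrt (by norm_num)
    rw [this]; norm_num
  have h0 : sLine t 0 = ((7/15 + (4/3)*t : ℝ) : ℂ) + Complex.I * Real.sqrt 3 * ((-1 : ℝ) : ℂ) := rfl
  have h1 : sLine t 1 = ((7/15 + (4/3)*t : ℝ) : ℂ) - Complex.I * Real.sqrt 3 * ((-1 : ℝ) : ℂ) := rfl
  have h2 : sLine t 2 = ((4/5 - t : ℝ) : ℂ) + Complex.I * Real.sqrt 3 * ((t : ℝ) : ℂ) := rfl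
  have h3' : sLine t 3 = ((4/5 - t : ℝ) : ℂ) - Complex.I * Real.sqrt 3 * ((t : ℝ) : ℂ) := rfl
  have h4 : sLine t 4 = ((-2 : ℝ) : ℂ) := rfl
  have h5 : sLine t 5 = ((-8/15 - (2/3)*t : ℝ) : ℂ) := rfl
  rw [h0, h1, h2, h3', h4, h5]
  push_cast
  linear_combination ((176/75 : ℂ) - (56/15)*(t:ℂ) - (94/75)*(t:ℂ)^2 + (24/5)*(t:ℂ)^3
    + (t:ℂ)^2 * ((Complex.I * (Real.sqrt 3 : ℂ))^2 - 3)) * hw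

/-- the quartic `σ₄(s₀,…,s₅)` restricted to the stated real line is a
degree-4 polynomial in `t` with four distinct real roots. -/
theorem stmt_2 :
    ∃ (c : ℂ) (r : Fin 4 → ℝ), c ≠ 0 ∧ Function.Injective r ∧
      ∀ t : ℝ, (Finset.univ.val.map (sLine t)).esymm 4 =
        c * ∏ i : Fin 4, ((t : ℂ) - (r i : ℂ)) := by
  obtain ⟨r1, r2, r3, ⟨h1a, h1b⟩, ⟨h2a, h2b⟩, ⟨h3a, h3b⟩, he1, he2, he3⟩ := cubic_roots
  have h12 : r1 ≠ r2 := by intro h; linarith [h.symm ▸ h2a]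
  have h13 : r1 ≠ r3 := by intro h; linarith [h.symm ▸ h3a]
  have h23 : r2 ≠ r3 := by intro h; linarith [h.symm ▸ h3a]
  have hcube := vieta r1 r2 r3 h12 h13 h23 he1 he2 he3
  refine ⟨64/27, ![2/5, r1, r2, r3], by norm_num, ?_, ?_⟩
  · intro i j hij
    fin_cases i <;> fin_cases j <;> simp_all <;> linarith
  · intro t
    rw [key_quartic, Fin.prod_univ_four]
    simp only [Matrix.cons_val_zero, Matrix.cons_val_one, Matrix.head_cons,
      Matrix.cons_val_two, Matrix.tail_cons, Matrix.cons_val_three]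
    have hreal : (64/27)*t^4 - (2048/135)*t^3 + (832/45)*t^2 + (320/27)*t - 22912/3375
        = (64/27) * (t - 2/5) * (t - r1) * (t - r2) * (t - r3) := by
      linear_combination (64/675)*(t - 2/5) * hcube t
    have hcast := congrArg (Complex.ofReal) hreal
    push_cast at hcast ⊢
    linear_combination hcast
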